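/- Consider a spring–mass network in ℝ^d (d = 2 or 3) with terminals B, interior nodes J carrying positive masses, and massless interior nodes L, with stiffness matrix K, mass matrices M_BB, M_JJ, and reduced stiffness matrix K̃ obtained by eliminating L. Suppose ω ∈ ℝ is such that ω² is not an eigenvalue of M_JJ^{−1/2} K̃_JJ M_JJ^{−1/2}. Then K̃_JJ − ω² M_JJ is invertible, and for every terminal displacement u_B there exist interior displacements u_J and u_L such that the vector (K − ω² M)(u_B, u_J, u_L) has zero components at all interior nodes (balance of forces at interior nodes), and its components at the terminal nodes equal W(ω) u_B, where W(ω) = K̃_BB − ω² M_BB − K̃_BJ (K̃_JJ − ω² M_JJ)^{−1} K̃_JB. -/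

import Mathlib

open scoped BigOperators
open Matrix

noncomputable section

/-- The Moore–Penrose pseudoinverse of a real square matrix, characterized by the
four Penrose conditions (it exists and is unique for every real matrix). -/
noncomputable def mpinv {n : Type*} [Fintype n] [DecidableEq n]
    (A : Matrix n n ℝ) : Matrix n n ℝ :=
  @dite _
    (∃ X : Matrix n n ℝ,
      A * X * A = A ∧ X * A * X = X ∧ (A * X)ᵀ = A * X ∧ (X * A)ᵀ = X * A)
    (Classical.propDecidable _) (fun h => h.choose) (fun _ => 0)

/-- Euclidean norm of a vector in `Fin d → ℝ`. -/
noncomputable def euclidNorm {d : ℕ} (v : Fin d → ℝ) : ℝ := Real.sqrt (∑ a, v a ^ 2)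

/-- Unit vector pointing from `p` towards `q`. -/
noncomputable def unitDir {d : ℕ} (p q : Fin d → ℝ) : Fin d → ℝ :=
  fun a => (euclidNorm (q - p))⁻¹ * (q a - p a)

/-- Stiffness matrix of a spring network with node positions `x` and spring
constants `k`: the `d × d` off-diagonal block coupling nodes `i ≠ j` is
`-k i j • n_{ij} n_{ij}ᵀ` and the `i`-th diagonal block is
`∑ j ≠ i, k i j • n_{ij} n_{ij}ᵀ`. -/
noncomputable def stiffness {d : ℕ} {ι : Type*} [Fintype ι] [DecidableEq ι]
    (x : ι → Fin d → ℝ) (k : ι → ι → ℝ) :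
    Matrix (ι × Fin d) (ι × Fin d) ℝ :=
  Matrix.of fun p q =>
    if p.1 = q.1 then
      ∑ j ∈ Finset.univ.filter (fun j => j ≠ p.1),
        k p.1 j * (unitDir (x p.1) (x j) p.2 * unitDir (x p.1) (x j) q.2)
    else
      -(k p.1 q.1 * (unitDir (x p.1) (x q.1) p.2 * unitDir (x p.1) (x q.1) q.2))

/-- `(x, k)` is a spring network: nodes are at distinct positions and the spring
constants are symmetric and nonnegative. -/
def IsSpringNetwork {d : ℕ} {ι : Type*} (x : ι → Fin d → ℝ) (k : ι → ι → ℝ) : Prop :=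
  Function.Injective x ∧ (∀ i j, k i j = k j i) ∧ (∀ i j, 0 ≤ k i j)

/-- The block of a matrix indexed by `(nodes × Fin d)` selected by the node
maps `f` and `g`. -/
def blk {d : ℕ} {ι κ₁ κ₂ : Type*} (K : Matrix (ι × Fin d) (ι × Fin d) ℝ)
    (f : κ₁ → ι) (g : κ₂ → ι) : Matrix (κ₁ × Fin d) (κ₂ × Fin d) ℝ :=
  K.submatrix (Prod.map f id) (Prod.map g id)

/-- Generalized Schur complement `K_BB - K_BI K_II† K_IB` eliminating the
interior nodes `I`. -/
noncomputable def schurResp {d : ℕ} {B I : Type*} [Fintype B] [Fintype I]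
    [DecidableEq B] [DecidableEq I]
    (K : Matrix ((B ⊕ I) × Fin d) ((B ⊕ I) × Fin d) ℝ) :
    Matrix (B × Fin d) (B × Fin d) ℝ :=
  blk K Sum.inl Sum.inl -
    blk K Sum.inl Sum.inr * mpinv (blk K Sum.inr Sum.inr) * blk K Sum.inr Sum.inl

/-- Static response matrix at the terminals `B` of the spring network `(x, k)`
with interior nodes `I`. -/
noncomputable def staticResponse {d : ℕ} {B I : Type*} [Fintype B] [Fintype I]
    [DecidableEq B] [DecidableEq I]
    (x : (B ⊕ I) → Fin d → ℝ) (k : (B ⊕ I) → (B ⊕ I) → ℝ) :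
    Matrix (B × Fin d) (B × Fin d) ℝ :=
  schurResp (stiffness x k)

/-- Balanced system of forces `f` supported at the points `x`: the total force
vanishes and the total torque vanishes (the torque being recorded as the
antisymmetric matrix `x_i ∧ f_i`, which for `d = 2` is equivalent to the scalar
wedge `u ∧ v = u 0 * v 1 - u 1 * v 0` and for `d = 3` to the cross product). -/
def IsBalanced {d : ℕ} {ι : Type*} [Fintype ι]
    (x f : ι → Fin d → ℝ) : Prop :=
  (∀ a, ∑ i, f i a = 0) ∧ ∀ a b, ∑ i, (x i a * f i b - x i b * f i a) = 0

/-- Planar wedge product. -/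
def wedge2 (u v : Fin 2 → ℝ) : ℝ := u 0 * v 1 - u 1 * v 0

/-- Cross product in `ℝ³`. -/
def cross3 (u v : Fin 3 → ℝ) : Fin 3 → ℝ :=
  ![u 1 * v 2 - u 2 * v 1, u 2 * v 0 - u 0 * v 2, u 0 * v 1 - u 1 * v 0]

/-- The `ε`-neighborhood `{y | dist (y, C) ≤ ε}` of a set `C` (for a closed set
`C`, membership is equivalent to being within Euclidean distance `ε` of some
point of `C`). -/
def epsNbhd {d : ℕ} (C : Set (Fin d → ℝ)) (ε : ℝ) : Set (Fin d → ℝ) :=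
  {y | ∃ z ∈ C, euclidNorm (y - z) ≤ ε}

/-- Combine terminal and interior displacements into a displacement of all
nodes. -/
def glue {d : ℕ} {B I : Type*} (uB : B × Fin d → ℝ) (uI : I × Fin d → ℝ) :
    (B ⊕ I) × Fin d → ℝ :=
  fun p => Sum.elim (fun b => uB (b, p.2)) (fun i => uI (i, p.2)) p.1

/-- The reduced stiffness matrix `K̃` at the nodes `B ⊕ J` of a spring–mass
network with massless interior nodes `L`, obtained by eliminating `L`. -/
noncomputable def dynKtilde {d : ℕ} {B J L : Type*} [Fintype B] [Fintype J] [Fintype L]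
    [DecidableEq B] [DecidableEq J] [DecidableEq L]
    (x : ((B ⊕ J) ⊕ L) → Fin d → ℝ) (k : ((B ⊕ J) ⊕ L) → ((B ⊕ J) ⊕ L) → ℝ) :
    Matrix ((B ⊕ J) × Fin d) ((B ⊕ J) × Fin d) ℝ :=
  schurResp (stiffness x k)

/-- The diagonal mass matrix `M_JJ` of the interior nodes with mass. -/
noncomputable def massJJ {d : ℕ} {B J L : Type*} [Fintype J] [DecidableEq J]
    (m : (B ⊕ J) ⊕ L → ℝ) : Matrix (J × Fin d) (J × Fin d) ℝ :=
  Matrix.diagonal fun p => m (Sum.inl (Sum.inr p.1))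

/-- The diagonal mass matrix `M_BB` of the terminal nodes. -/
noncomputable def massBB {d : ℕ} {B J L : Type*} [Fintype B] [DecidableEq B]
    (m : (B ⊕ J) ⊕ L → ℝ) : Matrix (B × Fin d) (B × Fin d) ℝ :=
  Matrix.diagonal fun p => m (Sum.inl (Sum.inl p.1))

/-- Dynamic response function
`W(ω) = K̃_BB - ω² M_BB - K̃_BJ (K̃_JJ - ω² M_JJ)⁻¹ K̃_JB` of a spring–mass
network with terminals `B`, interior nodes `J` carrying the masses `m` and
massless interior nodes `L`. -/
noncomputable def dynResponse {d : ℕ} {B J L : Type*} [Fintype B] [Fintype J] [Fintype L]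
    [DecidableEq B] [DecidableEq J] [DecidableEq L]
    (x : ((B ⊕ J) ⊕ L) → Fin d → ℝ) (k : ((B ⊕ J) ⊕ L) → ((B ⊕ J) ⊕ L) → ℝ)
    (m : (B ⊕ J) ⊕ L → ℝ) (ω : ℝ) : Matrix (B × Fin d) (B × Fin d) ℝ :=
  blk (dynKtilde x k) Sum.inl Sum.inl - ω ^ 2 • massBB m -
    blk (dynKtilde x k) Sum.inl Sum.inr *
      (blk (dynKtilde x k) Sum.inr Sum.inr - ω ^ 2 • massJJ m)⁻¹ *
      blk (dynKtilde x k) Sum.inr Sum.inl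


/-!
Eliminating the massless nodes `L` is static condensation. The stiffness matrix is positive
semidefinite, being `½ ∑ k_ij g_ij g_ijᵀ` with `g_ij = (e_i - e_j) ⊗ n_ij`, so every vector in
the kernel of `K_LL` is also in the kernel of `K_(B∪J),L`; by symmetry the columns of
`K_L,(B∪J)` lie in the range of `K_LL`. Hence for any generalized inverse `X` of `K_LL` the
displacement `u_L = -X K_L,(B∪J) u` balances the forces at `L`, and the forces at `B ∪ J` are
`K̃ u`. Off resonance `K̃_JJ - ω² M_JJ = M^½ (M^-½ K̃_JJ M^-½ - ω²) M^½` is invertible, and an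
ordinary Schur elimination of `J` from `K̃ - ω² M` leaves `W(ω) u_B` at the terminals.
-/

section Stiffness

variable {d : ℕ} {ι : Type*} [Fintype ι] [DecidableEq ι]

lemma unitDir_self (p : Fin d → ℝ) : unitDir p p = 0 := by
  ext a; simp [unitDir]

lemma unitDir_swap (p q : Fin d → ℝ) : unitDir q p = -unitDir p q := by
  have hnorm : euclidNorm (p - q) = euclidNorm (q - p) := by
    unfold euclidNorm
    congr 1
    refine Finset.sum_congr rfl fun a _ => ?_
    simp only [Pi.sub_apply]
    ring
  ext a
  simp only [unitDir, Pi.neg_apply, hnorm]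
  ring

def springVec (x : ι → Fin d → ℝ) (i j : ι) : ι × Fin d → ℝ :=
  fun p => ((Pi.single i 1 - Pi.single j 1 : ι → ℝ) p.1) * unitDir (x i) (x j) p.2

lemma stiffness_eq_sum_springVec (x : ι → Fin d → ℝ) (k : ι → ι → ℝ)
    (hk : ∀ i j, k i j = k j i) :
    stiffness x k = ∑ i, ∑ j, (k i j / 2) • vecMulVec (springVec x i j) (springVec x i j) := by
  ext ⟨p, a⟩ ⟨q, b⟩
  simp only [Matrix.sum_apply, Matrix.smul_apply, Matrix.vecMulVec_apply, smul_eq_mul, springVec,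
    Pi.sub_apply, Pi.single_apply, sub_mul, ite_mul, one_mul, zero_mul, mul_sub, mul_ite, mul_zero,
    Finset.sum_sub_distrib, Finset.sum_ite_irrel, Finset.sum_const_zero, Finset.sum_ite_eq,
    Finset.mem_univ, ↓reduceIte]
  by_cases hpq : p = q
  · subst hpq
    simp only [stiffness, Matrix.of_apply, if_true, unitDir_self, Pi.zero_apply, mul_zero,
      sub_zero, zero_sub, sub_neg_eq_add, unitDir_swap (x p), hk _ p]
    rw [Finset.sum_filter_of_ne fun j _ h => ?_, ← Finset.sum_add_distrib]
    · refine Finset.sum_congr rfl fun j _ => ?_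
      rw [Pi.neg_apply, Pi.neg_apply]
      ring
    · rintro rfl
      simp [unitDir_self] at h
  · simp only [stiffness, ne_eq, of_apply, hpq, ↓reduceIte, hk q p, unitDir_swap (x p) (x q),
      Pi.neg_apply, mul_neg, neg_mul, neg_neg, zero_sub, sub_zero]
    ring

lemma stiffness_posSemidef (x : ι → Fin d → ℝ) (k : ι → ι → ℝ)
    (hk : ∀ i j, k i j = k j i) (hk₀ : ∀ i j, 0 ≤ k i j) : (stiffness x k).PosSemidef := by
  rw [stiffness_eq_sum_springVec x k hk]
  refine posSemidef_sum _ fun i _ => posSemidef_sum _ fun j _ => ?_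
  have hij : (vecMulVec (springVec x i j) (springVec x i j)).PosSemidef := by
    simpa using posSemidef_vecMulVec_self_star (springVec x i j)
  exact hij.smul (div_nonneg (hk₀ i j) zero_le_two)

end Stiffness

section Pseudoinverse

variable {n : Type*} [Fintype n] [DecidableEq n]

lemma Matrix.IsHermitian.exists_penrose {A : Matrix n n ℝ} (hA : A.IsHermitian) :
    ∃ X : Matrix n n ℝ,
      A * X * A = A ∧ X * A * X = X ∧ (A * X)ᵀ = A * X ∧ (X * A)ᵀ = X * A := by
  have hA' : IsSelfAdjoint A := hA
  have hid : cfc (fun t : ℝ => t) A = A := cfc_id' ℝ A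
  have hmul (f g : ℝ → ℝ) : cfc f A * cfc g A = cfc (fun t => f t * g t) A :=
    (cfc_mul f g A (finite_real_spectrum.continuousOn f)
      (finite_real_spectrum.continuousOn g)).symm
  have hsymm (f : ℝ → ℝ) : (cfc f A)ᵀ = cfc f A := by
    rw [← conjTranspose_eq_transpose_of_trivial]
    exact cfc_predicate f A
  set X := cfc (fun t : ℝ => t⁻¹) A with hX
  refine ⟨X, ?_, ?_, ?_, ?_⟩ <;> rw [← hid, hX] <;> simp only [hmul, hsymm]
  · simp only [mul_inv_mul_cancel]
  · simpa using congrArg (cfc · A) (funext fun t : ℝ => mul_inv_mul_cancel t⁻¹)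

lemma mul_mpinv_mul_self {A : Matrix n n ℝ} (hA : A.IsHermitian) : A * mpinv A * A = A := by
  have h := hA.exists_penrose
  rw [mpinv, dif_pos h]
  exact h.choose_spec.1

end Pseudoinverse

lemma isUnit_sub_smul_diagonal {n : Type*} [Fintype n] [DecidableEq n] (A : Matrix n n ℝ)
    {m : n → ℝ} (hm : ∀ i, 0 < m i) {μ : ℝ}
    (h : ∀ v : n → ℝ, (diagonal (fun i => (√(m i))⁻¹) * A * diagonal (fun i => (√(m i))⁻¹)) *ᵥ v =
      μ • v → v = 0) :
    IsUnit (A - μ • diagonal m) := by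
  refine mulVec_injective_iff_isUnit.mp <|
    (injective_iff_map_eq_zero (A - μ • diagonal m).mulVecLin).mpr fun v hv => ?_
  have hs (i : n) : √(m i) ≠ 0 := (Real.sqrt_pos.mpr (hm i)).ne'
  have hAv : A *ᵥ v = μ • (diagonal m *ᵥ v) := by
    rwa [mulVecLin_apply, sub_mulVec, smul_mulVec, sub_eq_zero] at hv
  have hv' : diagonal (fun i => (√(m i))⁻¹) *ᵥ (fun i => √(m i) * v i) = v := by
    ext i
    simp [mulVec_diagonal, hs i]
  suffices (fun i => √(m i) * v i) = 0 by
    funext i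
    simpa [hs i] using congrFun this i
  refine h _ ?_
  rw [← mulVec_mulVec, ← mulVec_mulVec, hv', hAv, mulVec_smul]
  ext i
  simp only [mulVec_diagonal, Pi.smul_apply, smul_eq_mul]
  have hsq : (√(m i))⁻¹ * m i = √(m i) := by
    rw [inv_mul_eq_div, div_eq_iff (hs i), Real.mul_self_sqrt (hm i).le]
  linear_combination (μ * v i) * hsq

lemma blk_transpose_of_isHermitian {d : ℕ} {ι κ₁ κ₂ : Type*}
    {S : Matrix (ι × Fin d) (ι × Fin d) ℝ} (hS : S.IsHermitian) (f : κ₁ → ι) (g : κ₂ → ι) :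
    (blk S f g)ᵀ = blk S g f := by
  rw [blk, transpose_submatrix, ← conjTranspose_eq_transpose_of_trivial, hS, blk]

section Elimination

variable {d : ℕ} {P I : Type*} [Fintype P] [Fintype I]

lemma mulVec_glue (T : Matrix ((P ⊕ I) × Fin d) ((P ⊕ I) × Fin d) ℝ)
    (u : P × Fin d → ℝ) (w : I × Fin d → ℝ) :
    T *ᵥ glue u w =
      glue (blk T Sum.inl Sum.inl *ᵥ u + blk T Sum.inl Sum.inr *ᵥ w)
        (blk T Sum.inr Sum.inl *ᵥ u + blk T Sum.inr Sum.inr *ᵥ w) := by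
  ext ⟨p | i, a⟩ <;>
    simp [glue, blk, mulVec, dotProduct, Fintype.sum_prod_type, Fintype.sum_sum_type]

lemma glue_dotProduct_glue (u u' : P × Fin d → ℝ) (w w' : I × Fin d → ℝ) :
    glue u w ⬝ᵥ glue u' w' = u ⬝ᵥ u' + w ⬝ᵥ w' := by
  simp [glue, dotProduct, Fintype.sum_prod_type, Fintype.sum_sum_type]

lemma mulVec_glue_eliminate (T : Matrix ((P ⊕ I) × Fin d) ((P ⊕ I) × Fin d) ℝ)
    (X : Matrix (I × Fin d) (I × Fin d) ℝ)
    (hX : blk T Sum.inr Sum.inr * X * blk T Sum.inr Sum.inl = blk T Sum.inr Sum.inl)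
    (u : P × Fin d → ℝ) :
    T *ᵥ glue u (-((X * blk T Sum.inr Sum.inl) *ᵥ u)) =
      glue
        ((blk T Sum.inl Sum.inl - blk T Sum.inl Sum.inr * X * blk T Sum.inr Sum.inl) *ᵥ u) 0 := by
  rw [mulVec_glue, mulVec_neg, mulVec_neg, mulVec_mulVec, mulVec_mulVec, ← Matrix.mul_assoc,
    ← Matrix.mul_assoc, hX, sub_mulVec, ← sub_eq_add_neg, ← sub_eq_add_neg, sub_self]

namespace Matrix.PosSemidef

variable {S : Matrix ((P ⊕ I) × Fin d) ((P ⊕ I) × Fin d) ℝ}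

lemma blk_mulVec_eq_zero (hS : S.PosSemidef) {w : I × Fin d → ℝ}
    (hw : blk S Sum.inr Sum.inr *ᵥ w = 0) : blk S Sum.inl Sum.inr *ᵥ w = 0 := by
  have hSw : S *ᵥ glue 0 w = glue (blk S Sum.inl Sum.inr *ᵥ w) 0 := by
    simp [mulVec_glue, hw]
  have hquad : star (glue 0 w) ⬝ᵥ (S *ᵥ glue 0 w) = 0 := by
    simp [hSw, glue_dotProduct_glue]
  have hglue : glue (blk S Sum.inl Sum.inr *ᵥ w) (0 : I × Fin d → ℝ) = 0 :=
    hSw ▸ (hS.dotProduct_mulVec_zero_iff _).mp hquad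
  ext q
  simpa [glue] using congrFun hglue (Sum.inl q.1, q.2)

lemma blk_mul_eq_zero {κ : Type*} (hS : S.PosSemidef) {N : Matrix (I × Fin d) κ ℝ}
    (hN : blk S Sum.inr Sum.inr * N = 0) : blk S Sum.inl Sum.inr * N = 0 := by
  ext p q
  have hcol : blk S Sum.inr Sum.inr *ᵥ Nᵀ q = 0 := funext fun r => congrFun (congrFun hN r) q
  exact congrFun (hS.blk_mulVec_eq_zero hcol) p

lemma blk_mul_mpinv_mul_blk [DecidableEq I] (hS : S.PosSemidef) :
    blk S Sum.inr Sum.inr * mpinv (blk S Sum.inr Sum.inr) * blk S Sum.inr Sum.inl =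
      blk S Sum.inr Sum.inl := by
  set D := blk S Sum.inr Sum.inr
  set X := mpinv D
  have hDt : Dᵀ = D := blk_transpose_of_isHermitian hS.isHermitian _ _
  have hDXD : D * Xᵀ * D = D := by
    simpa [transpose_mul, hDt, Matrix.mul_assoc] using congrArg Matrix.transpose
      (mul_mpinv_mul_self (hS.isHermitian.submatrix _) : D * X * D = D)
  -- `1 - Xᵀ D` is killed by `D`, hence by `K_PI`; transposing gives `D X K_IP = K_IP`.
  have hker : blk S Sum.inl Sum.inr * (1 - Xᵀ * D) = 0 :=
    hS.blk_mul_eq_zero (by rw [Matrix.mul_sub, Matrix.mul_one, ← Matrix.mul_assoc, hDXD, sub_self])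
  have := congrArg Matrix.transpose hker
  rw [transpose_mul, blk_transpose_of_isHermitian hS.isHermitian, transpose_sub, transpose_one,
    transpose_mul, transpose_transpose, hDt, Matrix.sub_mul, Matrix.one_mul, transpose_zero,
    sub_eq_zero] at this
  exact this.symm

end Matrix.PosSemidef

end Elimination

section SpringMass

variable {d : ℕ} {B J L : Type*} [Fintype B] [Fintype J] [Fintype L]
    [DecidableEq B] [DecidableEq J] [DecidableEq L]

def dynStiffness (x : ((B ⊕ J) ⊕ L) → Fin d → ℝ) (k : ((B ⊕ J) ⊕ L) → ((B ⊕ J) ⊕ L) → ℝ)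
    (m : (B ⊕ J) ⊕ L → ℝ) (ω : ℝ) : Matrix ((B ⊕ J) × Fin d) ((B ⊕ J) × Fin d) ℝ :=
  dynKtilde x k - ω ^ 2 • diagonal fun p => m (Sum.inl p.1)

variable (x : ((B ⊕ J) ⊕ L) → Fin d → ℝ) (k : ((B ⊕ J) ⊕ L) → ((B ⊕ J) ⊕ L) → ℝ)
    (m : (B ⊕ J) ⊕ L → ℝ) (ω : ℝ)

lemma blk_dynStiffness_inr_inr :
    blk (dynStiffness x k m ω) Sum.inr Sum.inr =
      blk (dynKtilde x k) Sum.inr Sum.inr - ω ^ 2 • massJJ m := by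
  ext ⟨i, a⟩ ⟨j, b⟩
  simp [dynStiffness, blk, massJJ, diagonal_apply]

lemma dynResponse_eq_blk_dynStiffness :
    dynResponse x k m ω =
      blk (dynStiffness x k m ω) Sum.inl Sum.inl -
        blk (dynStiffness x k m ω) Sum.inl Sum.inr *
          (blk (dynStiffness x k m ω) Sum.inr Sum.inr)⁻¹ *
          blk (dynStiffness x k m ω) Sum.inr Sum.inl := by
  have hBB : blk (dynStiffness x k m ω) Sum.inl Sum.inl =
      blk (dynKtilde x k) Sum.inl Sum.inl - ω ^ 2 • massBB m := by
    ext ⟨i, a⟩ ⟨j, b⟩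
    simp [dynStiffness, blk, massBB, diagonal_apply]
  have hBJ : blk (dynStiffness x k m ω) Sum.inl Sum.inr = blk (dynKtilde x k) Sum.inl Sum.inr := by
    ext ⟨i, a⟩ ⟨j, b⟩
    simp [dynStiffness, blk]
  have hJB : blk (dynStiffness x k m ω) Sum.inr Sum.inl = blk (dynKtilde x k) Sum.inr Sum.inl := by
    ext ⟨i, a⟩ ⟨j, b⟩
    simp [dynStiffness, blk]
  rw [hBB, hBJ, hJB, blk_dynStiffness_inr_inr, dynResponse]

lemma stiffness_sub_smul_diagonal_mulVec_glue (hmL : ∀ l, m (Sum.inr l) = 0)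
    (u : (B ⊕ J) × Fin d → ℝ) (w : L × Fin d → ℝ)
    (hw : stiffness x k *ᵥ glue u w = glue (dynKtilde x k *ᵥ u) 0) :
    (stiffness x k - ω ^ 2 • diagonal (fun p => m p.1)) *ᵥ glue u w =
      glue (dynStiffness x k m ω *ᵥ u) 0 := by
  ext ⟨p | l, a⟩
  · simpa [sub_mulVec, smul_mulVec, dynStiffness, mulVec_diagonal, glue]
      using congrFun hw (Sum.inl p, a)
  · simpa [sub_mulVec, smul_mulVec, mulVec_diagonal, glue, hmL] using congrFun hw (Sum.inr l, a)

end SpringMass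

theorem dynamic_response_equilibration_general {d : ℕ}
    {B J L : Type*} [Fintype B] [Fintype J] [Fintype L]
    [DecidableEq B] [DecidableEq J] [DecidableEq L]
    (x : ((B ⊕ J) ⊕ L) → Fin d → ℝ) (k : ((B ⊕ J) ⊕ L) → ((B ⊕ J) ⊕ L) → ℝ)
    (hnet : IsSpringNetwork x k) (m : ((B ⊕ J) ⊕ L) → ℝ)
    (hmJ : ∀ j, 0 < m (Sum.inl (Sum.inr j)))
    (hmL : ∀ l, m (Sum.inr l) = 0)
    (ω : ℝ)
    (hres : ∀ v : J × Fin d → ℝ,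
      (Matrix.diagonal (fun p : J × Fin d => (Real.sqrt (m (Sum.inl (Sum.inr p.1))))⁻¹) *
        blk (dynKtilde x k) Sum.inr Sum.inr *
        Matrix.diagonal (fun p : J × Fin d => (Real.sqrt (m (Sum.inl (Sum.inr p.1))))⁻¹))
          *ᵥ v = ω ^ 2 • v → v = 0) :
    IsUnit (blk (dynKtilde x k) Sum.inr Sum.inr - ω ^ 2 • massJJ m) ∧
    ∀ uB : B × Fin d → ℝ, ∃ (uJ : J × Fin d → ℝ) (uL : L × Fin d → ℝ),
      (∀ (j : J) (a : Fin d),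
        ((stiffness x k - ω ^ 2 • Matrix.diagonal (fun p => m p.1)) *ᵥ
          glue (glue uB uJ) uL) (Sum.inl (Sum.inr j), a) = 0) ∧
      (∀ (l : L) (a : Fin d),
        ((stiffness x k - ω ^ 2 • Matrix.diagonal (fun p => m p.1)) *ᵥ
          glue (glue uB uJ) uL) (Sum.inr l, a) = 0) ∧
      (∀ (b : B) (a : Fin d),
        ((stiffness x k - ω ^ 2 • Matrix.diagonal (fun p => m p.1)) *ᵥ
          glue (glue uB uJ) uL) (Sum.inl (Sum.inl b), a) =
        (dynResponse x k m ω *ᵥ uB) (b, a)) := by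
  obtain ⟨-, hk, hk₀⟩ := hnet
  have hG : IsUnit (blk (dynKtilde x k) Sum.inr Sum.inr - ω ^ 2 • massJJ m) :=
    isUnit_sub_smul_diagonal (m := fun p : J × Fin d => m (Sum.inl (Sum.inr p.1))) _
      (fun p => hmJ p.1) hres
  refine ⟨hG, fun uB => ?_⟩
  rw [← blk_dynStiffness_inr_inr, isUnit_iff_isUnit_det] at hG
  set S := stiffness x k
  set T := dynStiffness x k m ω
  set uJ := -(((blk T Sum.inr Sum.inr)⁻¹ * blk T Sum.inr Sum.inl) *ᵥ uB)
  set uL := -((mpinv (blk S Sum.inr Sum.inr) * blk S Sum.inr Sum.inl) *ᵥ glue uB uJ)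
  have hL : S *ᵥ glue (glue uB uJ) uL = glue (dynKtilde x k *ᵥ glue uB uJ) 0 :=
    mulVec_glue_eliminate S _ (stiffness_posSemidef x k hk hk₀).blk_mul_mpinv_mul_blk _
  have hJ : T *ᵥ glue uB uJ = glue (dynResponse x k m ω *ᵥ uB) 0 := by
    rw [dynResponse_eq_blk_dynStiffness, mulVec_glue_eliminate T _
      (by rw [Matrix.mul_assoc]; exact mul_nonsing_inv_cancel_left _ _ hG) uB]
  have hR := stiffness_sub_smul_diagonal_mulVec_glue x k m ω hmL _ _ hL
  rw [hJ] at hR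
  exact ⟨uJ, uL, fun j a => by rw [hR]; rfl, fun l a => by rw [hR]; rfl, fun b a => by rw [hR]; rfl⟩

/-- away from resonance, `K̃_JJ - ω² M_JJ` is invertible, the
forces at all interior nodes can be equilibrated, and the resulting net forces
at the terminals are given by
`W(ω) = K̃_BB - ω² M_BB - K̃_BJ (K̃_JJ - ω² M_JJ)⁻¹ K̃_JB`. -/
theorem dynamic_response_equilibration {d : ℕ} (hd : d = 2 ∨ d = 3)
    {B J L : Type*} [Fintype B] [Fintype J] [Fintype L]
    [DecidableEq B] [DecidableEq J] [DecidableEq L]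
    (x : ((B ⊕ J) ⊕ L) → Fin d → ℝ) (k : ((B ⊕ J) ⊕ L) → ((B ⊕ J) ⊕ L) → ℝ)
    (hnet : IsSpringNetwork x k) (m : ((B ⊕ J) ⊕ L) → ℝ)
    (hmB : ∀ b, 0 ≤ m (Sum.inl (Sum.inl b)))
    (hmJ : ∀ j, 0 < m (Sum.inl (Sum.inr j)))
    (hmL : ∀ l, m (Sum.inr l) = 0)
    (ω : ℝ)
    (hres : ∀ v : J × Fin d → ℝ,
      (Matrix.diagonal (fun p : J × Fin d => (Real.sqrt (m (Sum.inl (Sum.inr p.1))))⁻¹) *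
        blk (dynKtilde x k) Sum.inr Sum.inr *
        Matrix.diagonal (fun p : J × Fin d => (Real.sqrt (m (Sum.inl (Sum.inr p.1))))⁻¹))
          *ᵥ v = ω ^ 2 • v → v = 0) :
    IsUnit (blk (dynKtilde x k) Sum.inr Sum.inr - ω ^ 2 • massJJ m) ∧
    ∀ uB : B × Fin d → ℝ, ∃ (uJ : J × Fin d → ℝ) (uL : L × Fin d → ℝ),
      (∀ (j : J) (a : Fin d),
        ((stiffness x k - ω ^ 2 • Matrix.diagonal (fun p => m p.1)) *ᵥ
          glue (glue uB uJ) uL) (Sum.inl (Sum.inr j), a) = 0) ∧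
      (∀ (l : L) (a : Fin d),
        ((stiffness x k - ω ^ 2 • Matrix.diagonal (fun p => m p.1)) *ᵥ
          glue (glue uB uJ) uL) (Sum.inr l, a) = 0) ∧
      (∀ (b : B) (a : Fin d),
        ((stiffness x k - ω ^ 2 • Matrix.diagonal (fun p => m p.1)) *ᵥ
          glue (glue uB uJ) uL) (Sum.inl (Sum.inl b), a) =
        (dynResponse x k m ω *ᵥ uB) (b, a)) :=
  dynamic_response_equilibration_general x k hnet m hmJ hmL ω hres
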